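/- arXiv:1201.3141 — 2 statements merged into one kernel-verified Lean document; each statement's English description precedes it below -/
import Mathlib

section
/- Let k be a field, n a positive integer, and H the n×n nilpotent Jordan block. If τ is an n×n matrix over k satisfying Hτ = τH and τ = στ + τσ for some matrix σ over k also commuting with H, then τ = 0. -/
open Matrix Finset

section
variable {k : Type*} [Field k] {n : ℕ}

lemma jordan_pow (m : ℕ) (i j : Fin n) :
    ((Matrix.of fun (i j : Fin n) => if (i : ℕ) + 1 = (j : ℕ) then (1:k) else 0) ^ m) i j
      = if (i : ℕ) + m = (j : ℕ) then 1 else 0 := by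
  induction m generalizing i j with
  | zero => simp [Matrix.one_apply, Fin.ext_iff]
  | succ m ih =>
    rw [pow_succ, Matrix.mul_apply]
    simp only [ih, Matrix.of_apply]
    by_cases h : (i : ℕ) + (m + 1) = (j : ℕ)
    · have hb : (i : ℕ) + m < n := by omega
      rw [Finset.sum_eq_single_of_mem ⟨(i:ℕ)+m, hb⟩ (Finset.mem_univ _)]
      · have h2 : (i:ℕ) + m + 1 = (j:ℕ) := by omega
        simp [h, h2]
      · intro b _ hb'
        have : ¬ ((i:ℕ) + m = (b:ℕ)) := by
          intro he; exact hb' (by simp [Fin.ext_iff, ← he])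
        simp [this]
    · rw [if_neg h]
      apply Finset.sum_eq_zero
      intro b _
      rcases eq_or_ne ((i:ℕ)+m) (b:ℕ) with he | he
      · have : ¬ ((b:ℕ) + 1 = (j:ℕ)) := by omega
        simp [this]
      · simp [he]

lemma jordan_centralizer (hn : 0 < n) (A : Matrix (Fin n) (Fin n) k)
    (hA : (Matrix.of fun (i j : Fin n) => if (i : ℕ) + 1 = (j : ℕ) then (1:k) else 0) * A
        = A * (Matrix.of fun (i j : Fin n) => if (i : ℕ) + 1 = (j : ℕ) then (1:k) else 0)) :
    A = ∑ m ∈ Finset.range n,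
        (if h : m < n then A ⟨0, hn⟩ ⟨m, h⟩ else 0) •
          (Matrix.of fun (i j : Fin n) => if (i : ℕ) + 1 = (j : ℕ) then (1:k) else 0) ^ m := by
  set H : Matrix (Fin n) (Fin n) k :=
    Matrix.of fun (i j : Fin n) => if (i : ℕ) + 1 = (j : ℕ) then 1 else 0 with hH
  have hsub : ∀ (j : Fin n), (j:ℕ) - 1 < n :=
    fun j => Nat.lt_of_le_of_lt (Nat.sub_le _ _) j.isLt
  -- entry recurrence
  have hrec : ∀ (i j : Fin n) (hi : (i:ℕ) + 1 < n),
      A ⟨(i:ℕ)+1, hi⟩ j = if 0 < (j:ℕ) then A i ⟨(j:ℕ)-1, hsub j⟩ else 0 := by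
    intro i j hi
    have h1 : (H * A) i j = A ⟨(i:ℕ)+1, hi⟩ j := by
      rw [Matrix.mul_apply]
      rw [Finset.sum_eq_single_of_mem ⟨(i:ℕ)+1, hi⟩ (Finset.mem_univ _)]
      · simp [hH]
      · intro b _ hb
        have : ¬ ((i:ℕ) + 1 = (b:ℕ)) := fun he => hb (by simp [Fin.ext_iff, ← he])
        simp [hH, this]
    have h2 : (A * H) i j = if 0 < (j:ℕ) then A i ⟨(j:ℕ)-1, hsub j⟩ else 0 := by
      rw [Matrix.mul_apply]
      by_cases hj : 0 < (j:ℕ)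
      · rw [if_pos hj]
        rw [Finset.sum_eq_single_of_mem ⟨(j:ℕ)-1, hsub j⟩ (Finset.mem_univ _)]
        · have : (j:ℕ) - 1 + 1 = (j:ℕ) := by omega
          simp [hH, this]
        · intro b _ hb
          have : ¬ ((b:ℕ) + 1 = (j:ℕ)) := by
            intro he; exact hb (by simp [Fin.ext_iff]; omega)
          simp [hH, this]
      · rw [if_neg hj]
        apply Finset.sum_eq_zero
        intro b _
        have : ¬ ((b:ℕ) + 1 = (j:ℕ)) := by omega
        simp [hH, this]
    rw [← h1, hA, h2]
  -- Toeplitz form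
  have hform : ∀ (m : ℕ) (i j : Fin n), (i:ℕ) = m →
      A i j = if h : (i:ℕ) ≤ (j:ℕ) then A ⟨0, hn⟩ ⟨(j:ℕ)-(i:ℕ), by omega⟩ else 0 := by
    intro m
    induction m with
    | zero =>
      intro i j hi
      have : i = ⟨0, hn⟩ := by simp [Fin.ext_iff, hi]
      subst this
      simp
    | succ m ih =>
      intro i j hi
      have hm : m + 1 < n := hi ▸ i.isLt
      have hi' : i = ⟨m+1, hm⟩ := by simp [Fin.ext_iff, hi]
      have hmn : m < n := by omega
      have hr := hrec ⟨m, hmn⟩ j (by simpa using hm)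
      rw [hi']
      rw [show (⟨(m:ℕ)+1, hm⟩ : Fin n) = ⟨((⟨m, hmn⟩ : Fin n):ℕ)+1, by simpa using hm⟩ by rfl]
      rw [hr]
      by_cases hj : 0 < (j:ℕ)
      · rw [if_pos hj, ih ⟨m, hmn⟩ ⟨(j:ℕ)-1, hsub j⟩ rfl]
        by_cases hle : m + 1 ≤ (j:ℕ)
        · rw [dif_pos (show ((⟨m,hmn⟩ : Fin n):ℕ) ≤ ((⟨(j:ℕ)-1, hsub j⟩ : Fin n):ℕ) by simp; omega),
              dif_pos (by simp; omega)]
          congr 1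
          simp [Fin.ext_iff]; omega
        · rw [dif_neg (show ¬ ((⟨m,hmn⟩ : Fin n):ℕ) ≤ ((⟨(j:ℕ)-1, hsub j⟩ : Fin n):ℕ) by simp; omega),
              dif_neg (by simp; omega)]
      · rw [if_neg hj, dif_neg (by simp; omega)]
  -- conclude
  ext i j
  rw [Matrix.sum_apply]
  simp only [Matrix.smul_apply, smul_eq_mul, hH, jordan_pow]
  rw [hform (i:ℕ) i j rfl]
  by_cases hle : (i:ℕ) ≤ (j:ℕ)
  · rw [dif_pos hle]
    rw [Finset.sum_eq_single_of_mem ((j:ℕ)-(i:ℕ)) (Finset.mem_range.mpr (by omega))]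
    · rw [dif_pos (by omega : (j:ℕ)-(i:ℕ) < n), if_pos (by omega), mul_one]
    · intro b _ hb
      rw [if_neg (by omega), mul_zero]
  · rw [dif_neg hle]
    symm
    apply Finset.sum_eq_zero
    intro b hb
    rw [if_neg (by omega), mul_zero]

end

theorem stmt_3 (k : Type*) [Field k] (n : ℕ) (hn : 0 < n)
    (H σ τ : Matrix (Fin n) (Fin n) k)
    (hH : H = Matrix.of fun (i j : Fin n) => if (i : ℕ) + 1 = (j : ℕ) then 1 else 0)
    (hτ : H * τ = τ * H) (hσ : H * σ = σ * H) (hidem : σ * σ = σ)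
    (hrel : τ = σ * τ + τ * σ) :
    τ = 0 := by
  subst hH
  have hc : σ * τ = τ * σ := by
    rw [jordan_centralizer hn σ hσ, jordan_centralizer hn τ hτ]
    refine Commute.sum_left _ _ _ fun m _ => Commute.sum_right _ _ _ fun l _ => ?_
    exact ((Commute.pow_pow_self _ _ _).smul_left _).smul_right _
  have h1 : σ * τ = σ * τ + σ * τ := by
    conv_lhs => rw [hrel]
    rw [mul_add, ← mul_assoc, hidem, ← hc, ← mul_assoc, hidem]
  rw [left_eq_add] at h1
  rw [hrel, ← hc, h1, add_zero]
end

section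
/- Let k be an infinite field, D a finite-dimensional commutative k-algebra, and a, b ∈ D such that {1, a, b} is linearly independent over k and {1, a, a², b} is linearly independent over k. Then for all but finitely many t ∈ k, the set {1, a, b, (a+tb)²} is linearly independent over k. -/
theorem stmt_5 (k : Type*) [Field k] [Infinite k]
    (D : Type*) [CommRing D] [Algebra k D] [FiniteDimensional k D]
    (a b : D)
    (h3 : LinearIndependent k ![1, a, b])
    (h4 : LinearIndependent k ![1, a, a ^ 2, b]) :
    {t : k | ¬ LinearIndependent k ![1, a, b, (a + t • b) ^ 2]}.Finite := by
  classical
  set S : Submodule k D := Submodule.span k (Set.range ![1, a, b]) with hS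
  have himg : (![1, a, a ^ 2, b] '' ({0, 1, 3} : Set (Fin 4))) = Set.range ![1, a, b] := by
    ext x
    constructor
    · rintro ⟨i, hi, rfl⟩
      fin_cases i
      · exact ⟨0, rfl⟩
      · exact ⟨1, rfl⟩
      · simp at hi
      · exact ⟨2, rfl⟩
    · rintro ⟨i, rfl⟩
      fin_cases i
      · exact ⟨0, by simp, rfl⟩
      · exact ⟨1, by simp, rfl⟩
      · exact ⟨3, by simp, rfl⟩
  have ha2 : a ^ 2 ∉ S := by
    have h := h4.notMem_span_image (s := ({0, 1, 3} : Set (Fin 4)))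
      (x := (2 : Fin 4)) (by decide)
    rw [himg] at h
    exact h
  set mk := S.mkQ with hmk
  have hne : mk (a ^ 2) ≠ 0 := by
    simpa [hmk, Submodule.Quotient.mk_eq_zero] using ha2
  obtain ⟨φ, hφ⟩ : ∃ φ : Module.Dual k (D ⧸ S), φ (mk (a ^ 2)) ≠ 0 := by
    by_contra h
    push_neg at h
    exact hne ((Module.forall_dual_apply_eq_zero_iff k _).mp h)
  set P : Polynomial k :=
    Polynomial.C (φ (mk (a ^ 2))) + Polynomial.C (φ (mk (2 * (a * b)))) * Polynomial.X
      + Polynomial.C (φ (mk (b * b))) * Polynomial.X ^ 2 with hP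
  have hPne : P ≠ 0 := by
    intro h
    apply hφ
    have := congrArg (fun q => Polynomial.coeff q 0) h
    simpa [hP] using this
  apply Set.Finite.subset (Polynomial.finite_setOf_isRoot hPne)
  intro t ht
  have hfun : ∀ x : D, ![1, a, b, x] = Fin.snoc ![1, a, b] x := by
    intro x; funext i; fin_cases i <;> simp [Fin.snoc] <;> rfl
  have hmem : (a + t • b) ^ 2 ∈ S := by
    by_contra hmem
    exact ht (by rw [hfun]; exact linearIndependent_fin_snoc.mpr ⟨h3, hmem⟩)
  have hexp : (a + t • b) ^ 2 = a ^ 2 + t • (2 * (a * b)) + (t * t) • (b * b) := by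
    rw [Algebra.smul_def, Algebra.smul_def, Algebra.smul_def, map_mul]; ring
  have h0 : mk ((a + t • b) ^ 2) = 0 := by
    simpa [hmk, Submodule.Quotient.mk_eq_zero] using hmem
  have h1 : φ (mk (a ^ 2)) + t * φ (mk (2 * (a * b))) + (t * t) * φ (mk (b * b)) = 0 := by
    have := congrArg φ h0
    rw [hexp] at this
    simpa [map_add, map_smul, smul_eq_mul] using this
  show P.IsRoot t
  simp only [hP, Polynomial.IsRoot, Polynomial.eval_add, Polynomial.eval_mul,
    Polynomial.eval_C, Polynomial.eval_X, Polynomial.eval_pow]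
  linear_combination h1
end
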